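/- arXiv:2103.12025 — 8 statements merged into one kernel-verified Lean document; each statement's English description precedes it below -/
import Mathlib

section
/- Let n ≥ 1, let H be a Hermitian n×n complex matrix, let ρ₀ be an n×n complex matrix, and let μ, σ : ℝ → ℝ be functions differentiable at every τ > 0 with σ(τ) > 0 for τ > 0. For τ > 0 define the matrix-valued Bochner integral ρ(τ) = ∫_ℝ (2π σ(τ)²)^{-1/2} exp(-(ξ - μ(τ))²/(2σ(τ)²)) · (exp(-i ξ τ H) * ρ₀ * exp(i ξ τ H)) dξ, where exp denotes the matrix exponential. Then for every τ > 0, ρ is differentiable at τ and ρ'(τ) = -i ω(τ) [H, ρ(τ)] - (Γ(τ)/2) [H, [H, ρ(τ)]], where ω(τ) = μ(τ) + τ μ'(τ), Γ(τ) = 2 σ(τ)² τ (1 + τ σ'(τ)/σ(τ)), and [A,B] = A*B - B*A denotes the matrix commutator. -/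
attribute [local instance] Matrix.normedAddCommGroup Matrix.normedSpace

/-!
In an eigenbasis of `H`, the `(j, k)` component of `ρ₀` is only multiplied by the phase
`exp (-i ξ τ a)` with `a = λ_j - λ_k`. The random phase `ξ τ` is Gaussian with mean `τ μ(τ)` and
variance `τ² σ(τ)²`, so averaging turns the phase into the characteristic function
`exp (-i a τ μ - a² τ² σ² / 2)`. Its `τ`-derivative is `(-i a ω - a² Γ / 2)` times itself, because
`ω = (τ μ)'` and `Γ = (τ² σ²)'`; and `a`, `a²` are exactly the eigenvalues of `[H, ·]` and
`[H, [H, ·]]` on that component.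
-/

open MeasureTheory ProbabilityTheory Complex Matrix Unitary
open scoped NNReal

/-- Unlike `charFun (gaussianReal m v)`, defined for every real `v`, so that it can be
differentiated along a path of variances. -/
noncomputable def gaussianCharFun (m v t : ℝ) : ℂ := cexp (t * m * I - v * t ^ 2 / 2)

lemma charFun_gaussianReal_eq_gaussianCharFun (m : ℝ) (v : ℝ≥0) (t : ℝ) :
    charFun (gaussianReal m v) t = gaussianCharFun m v t :=
  charFun_gaussianReal t

lemma gaussianCharFun_mul (m v c t : ℝ) :
    gaussianCharFun m v (c * t) = gaussianCharFun (c * m) (c ^ 2 * v) t := by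
  simp only [gaussianCharFun]
  push_cast
  ring_nf

lemma HasDerivAt.gaussianCharFun {m v : ℝ → ℝ} {m' v' τ : ℝ} (hm : HasDerivAt m m' τ)
    (hv : HasDerivAt v v' τ) (t : ℝ) :
    HasDerivAt (fun s ↦ gaussianCharFun (m s) (v s) t)
      ((t * m' * I - v' * t ^ 2 / 2) * gaussianCharFun (m τ) (v τ) t) τ := by
  rw [mul_comm]
  exact (((hm.ofReal_comp.const_mul (t : ℂ)).mul_const I).sub
    ((hv.ofReal_comp.mul_const ((t : ℂ) ^ 2)).div_const 2)).cexp

section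
variable {ι E : Type*} [Fintype ι] [NormedAddCommGroup E] [NormedSpace ℂ E]

lemma integral_sum_cexp_smul [CompleteSpace E] (ν : Measure ℝ) [IsProbabilityMeasure ν]
    (t : ι → ℝ) (C : ι → E) :
    ∫ ξ, ∑ p, cexp (t p * ξ * I) • C p ∂ν = ∑ p, charFun ν (t p) • C p := by
  have hint : ∀ p, Integrable (fun ξ : ℝ ↦ cexp (t p * ξ * I)) ν := fun p ↦
    (integrable_const (1 : ℝ)).mono (by fun_prop) (ae_of_all _ fun ξ ↦ by simp [← ofReal_mul])
  rw [integral_finsetSum _ fun p _ ↦ (hint p).smul_const (C p)]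
  simp_rw [integral_smul_const, charFun_apply_real]

theorem hasDerivAt_of_eventuallyEq_sum_gaussianCharFun_smul (L : E →ₗ[ℂ] E) (a : ι → ℝ)
    (C : ι → E) (hC : ∀ p, L (C p) = (a p : ℂ) • C p) {m v : ℝ → ℝ} {m' v' τ : ℝ}
    (hm : HasDerivAt m m' τ) (hv : HasDerivAt v v' τ) {ρ : ℝ → E}
    (hρ : ρ =ᶠ[nhds τ] fun s ↦ ∑ p, gaussianCharFun (m s) (v s) (-a p) • C p) :
    HasDerivAt ρ ((-I * m') • L (ρ τ) - ((v' : ℂ) / 2) • L (L (ρ τ))) τ := by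
  have hsum := HasDerivAt.fun_sum (u := Finset.univ) fun p _ ↦
    (hm.gaussianCharFun hv (-a p)).smul_const (C p)
  rw [hρ.eq_of_nhds]
  convert hsum.congr_of_eventuallyEq hρ using 1
  simp only [map_sum, map_smul, hC, smul_smul, Finset.smul_sum, ← Finset.sum_sub_distrib,
    ← sub_smul]
  refine Finset.sum_congr rfl fun p _ ↦ ?_
  congr 1
  push_cast
  ring
end

namespace Matrix
variable {m α : Type*} [Fintype m] [DecidableEq m] [NonAssocSemiring α]

lemma diagonal_mul_single_self_one (d : m → α) (j : m) :
    diagonal d * single j j 1 = single j j (d j) := by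
  rw [← diagonal_single, ← diagonal_single, diagonal_mul_diagonal]
  congr 1
  ext i
  rcases eq_or_ne i j with rfl | h <;> simp [*]

lemma single_self_one_mul_diagonal (d : m → α) (j : m) :
    single j j 1 * diagonal d = single j j (d j) := by
  rw [← diagonal_single, ← diagonal_single, diagonal_mul_diagonal]
  congr 1
  ext i
  rcases eq_or_ne i j with rfl | h <;> simp [*]

end Matrix

namespace Matrix.IsHermitian
variable {m : Type*} [Fintype m] [DecidableEq m] {H : Matrix m m ℂ} (hH : H.IsHermitian)

noncomputable def eigenprojection (j : m) : Matrix m m ℂ :=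
  conjStarAlgAut ℂ _ hH.eigenvectorUnitary (single j j 1)

lemma sum_eigenprojection : ∑ j, hH.eigenprojection j = 1 := by
  simp only [eigenprojection, ← map_sum, sum_single_one, map_one]

lemma conj_diagonal_mul_eigenprojection (d : m → ℂ) (j : m) :
    conjStarAlgAut ℂ _ hH.eigenvectorUnitary (diagonal d) * hH.eigenprojection j =
      d j • hH.eigenprojection j := by
  rw [eigenprojection, ← map_mul, ← map_smul, diagonal_mul_single_self_one, smul_single,
    smul_eq_mul, mul_one]

lemma eigenprojection_mul_conj_diagonal (d : m → ℂ) (j : m) :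
    hH.eigenprojection j * conjStarAlgAut ℂ _ hH.eigenvectorUnitary (diagonal d) =
      d j • hH.eigenprojection j := by
  rw [eigenprojection, ← map_mul, ← map_smul, single_self_one_mul_diagonal, smul_single,
    smul_eq_mul, mul_one]

lemma mul_eigenprojection (j : m) :
    H * hH.eigenprojection j = (hH.eigenvalues j : ℂ) • hH.eigenprojection j := by
  have := hH.conj_diagonal_mul_eigenprojection (RCLike.ofReal ∘ hH.eigenvalues) j
  rwa [← hH.spectral_theorem] at this

lemma eigenprojection_mul (j : m) :
    hH.eigenprojection j * H = (hH.eigenvalues j : ℂ) • hH.eigenprojection j := by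
  have := hH.eigenprojection_mul_conj_diagonal (RCLike.ofReal ∘ hH.eigenvalues) j
  rwa [← hH.spectral_theorem] at this

lemma exp_smul_eq_conj_diagonal (z : ℂ) :
    NormedSpace.exp (z • H) =
      conjStarAlgAut ℂ _ hH.eigenvectorUnitary (diagonal fun i ↦ cexp (z * hH.eigenvalues i)) := by
  have hinv : (hH.eigenvectorUnitary : Matrix m m ℂ)⁻¹ =
      star (hH.eigenvectorUnitary : Matrix m m ℂ) :=
    inv_eq_left_inv (by simp)
  conv_lhs => rw [hH.spectral_theorem]
  rw [← map_smul, conjStarAlgAut_apply, conjStarAlgAut_apply, ← hinv,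
    exp_conj _ _ Unitary.isUnit_coe, ← diagonal_smul, exp_diagonal]
  congr
  ext i
  simp [← Complex.exp_eq_exp_ℂ]

lemma sum_eigenprojection_mul_mul_eigenprojection (X : Matrix m m ℂ) :
    ∑ p : m × m, hH.eigenprojection p.1 * X * hH.eigenprojection p.2 = X := by
  rw [Fintype.sum_prod_type]
  simp only [← Finset.mul_sum, ← Finset.sum_mul, sum_eigenprojection, one_mul, mul_one]

lemma exp_smul_mul_mul_exp_smul (X : Matrix m m ℂ) (z w : ℂ) :
    NormedSpace.exp (z • H) * X * NormedSpace.exp (w • H) =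
      ∑ p : m × m, cexp (z * hH.eigenvalues p.1 + w * hH.eigenvalues p.2) •
        (hH.eigenprojection p.1 * X * hH.eigenprojection p.2) := by
  conv_lhs => rw [← hH.sum_eigenprojection_mul_mul_eigenprojection X]
  simp only [Finset.mul_sum, Finset.sum_mul]
  refine Finset.sum_congr rfl fun p _ ↦ ?_
  rw [hH.exp_smul_eq_conj_diagonal, hH.exp_smul_eq_conj_diagonal, ← mul_assoc, ← mul_assoc,
    hH.conj_diagonal_mul_eigenprojection, mul_assoc _ _ (conjStarAlgAut _ _ _ _),
    hH.eigenprojection_mul_conj_diagonal, smul_mul_assoc, smul_mul_assoc, mul_smul_comm,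
    smul_smul, ← Complex.exp_add, add_comm]

lemma commutator_eigenprojection_mul_mul_eigenprojection (X : Matrix m m ℂ) (j k : m) :
    H * (hH.eigenprojection j * X * hH.eigenprojection k) -
        hH.eigenprojection j * X * hH.eigenprojection k * H =
      ((hH.eigenvalues j - hH.eigenvalues k : ℝ) : ℂ) •
        (hH.eigenprojection j * X * hH.eigenprojection k) := by
  rw [← mul_assoc, ← mul_assoc, hH.mul_eigenprojection, mul_assoc _ _ H, hH.eigenprojection_mul,
    smul_mul_assoc, smul_mul_assoc, mul_smul_comm, ofReal_sub, sub_smul]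

lemma integral_gaussianPDFReal_smul_exp_conj (X : Matrix m m ℂ) (μ : ℝ) {v : ℝ≥0} (hv : v ≠ 0)
    (s : ℝ) :
    ∫ ξ : ℝ, gaussianPDFReal μ v ξ •
        (NormedSpace.exp ((-I * ξ * s) • H) * X * NormedSpace.exp ((I * ξ * s) • H)) =
      ∑ p : m × m,
        gaussianCharFun (s * μ) (s ^ 2 * v) (-(hH.eigenvalues p.1 - hH.eigenvalues p.2)) •
          (hH.eigenprojection p.1 * X * hH.eigenprojection p.2) := by
  have hphase (ξ : ℝ) :
      NormedSpace.exp ((-I * ξ * s) • H) * X * NormedSpace.exp ((I * ξ * s) • H) =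
        ∑ p : m × m, cexp ((s * -(hH.eigenvalues p.1 - hH.eigenvalues p.2) : ℝ) * ξ * I) •
          (hH.eigenprojection p.1 * X * hH.eigenprojection p.2) := by
    rw [hH.exp_smul_mul_mul_exp_smul]
    congr! 3
    push_cast
    ring
  simp_rw [← integral_gaussianReal_eq_integral_smul hv, hphase, integral_sum_cexp_smul,
    charFun_gaussianReal_eq_gaussianCharFun, gaussianCharFun_mul]

end Matrix.IsHermitian

theorem gaussian_mixture_of_unitaries_master_equation_general
    (n : ℕ)
    (H ρ₀ : Matrix (Fin n) (Fin n) ℂ) (hH : H.IsHermitian)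
    (μ σ μ' σ' : ℝ → ℝ)
    (hμ : ∀ τ > (0 : ℝ), HasDerivAt μ (μ' τ) τ)
    (hσ : ∀ τ > (0 : ℝ), HasDerivAt σ (σ' τ) τ)
    (hσpos : ∀ τ > (0 : ℝ), 0 < σ τ)
    (ρ : ℝ → Matrix (Fin n) (Fin n) ℂ)
    (hρ : ∀ τ > (0 : ℝ), ρ τ =
      ∫ ξ : ℝ,
        ((Real.sqrt (2 * Real.pi * (σ τ) ^ 2))⁻¹ *
            Real.exp (-(ξ - μ τ) ^ 2 / (2 * (σ τ) ^ 2))) •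
          (NormedSpace.exp ((-(Complex.I) * (ξ : ℂ) * (τ : ℂ)) • H) * ρ₀ *
            NormedSpace.exp ((Complex.I * (ξ : ℂ) * (τ : ℂ)) • H)))
    (ω Γ : ℝ → ℝ)
    (hω : ∀ τ > (0 : ℝ), ω τ = μ τ + τ * μ' τ)
    (hΓ : ∀ τ > (0 : ℝ), Γ τ = 2 * (σ τ) ^ 2 * τ * (1 + τ * σ' τ / σ τ)) :
    ∀ τ > (0 : ℝ),
      HasDerivAt ρ
        ((-(Complex.I) * (ω τ : ℂ)) • (H * ρ τ - ρ τ * H) -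
          ((Γ τ : ℂ) / 2) •
            (H * (H * ρ τ - ρ τ * H) - (H * ρ τ - ρ τ * H) * H)) τ := by
  intro τ hτ
  have hexpansion : ρ =ᶠ[nhds τ] fun s ↦ ∑ p : Fin n × Fin n,
      gaussianCharFun (s * μ s) (s ^ 2 * σ s ^ 2) (-(hH.eigenvalues p.1 - hH.eigenvalues p.2)) •
        (hH.eigenprojection p.1 * ρ₀ * hH.eigenprojection p.2) := by
    filter_upwards [Ioi_mem_nhds hτ] with s hs
    have hv : (σ s ^ 2).toNNReal ≠ 0 := by simpa using (hσpos s hs).ne'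
    simpa [gaussianPDFReal, Real.coe_toNNReal _ (sq_nonneg (σ s)), hρ s hs] using
      hH.integral_gaussianPDFReal_smul_exp_conj ρ₀ (μ s) hv s
  have hmean : HasDerivAt (fun s ↦ s * μ s) (ω τ) τ :=
    ((hasDerivAt_id' τ).fun_mul (hμ τ hτ)).congr_deriv (by rw [hω τ hτ]; ring)
  have hvariance : HasDerivAt (fun s ↦ s ^ 2 * σ s ^ 2) (Γ τ) τ :=
    ((hasDerivAt_pow 2 τ).fun_mul ((hσ τ hτ).fun_pow 2)).congr_deriv (by
      rw [hΓ τ hτ]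
      field_simp [(hσpos τ hτ).ne']
      ring)
  have hC (p : Fin n × Fin n) : (LinearMap.mulLeft ℂ H - LinearMap.mulRight ℂ H)
      (hH.eigenprojection p.1 * ρ₀ * hH.eigenprojection p.2) =
        ((hH.eigenvalues p.1 - hH.eigenvalues p.2 : ℝ) : ℂ) •
          (hH.eigenprojection p.1 * ρ₀ * hH.eigenprojection p.2) :=
    hH.commutator_eigenprojection_mul_mul_eigenprojection ρ₀ p.1 p.2
  have hmaster :=
    hasDerivAt_of_eventuallyEq_sum_gaussianCharFun_smul _ _ _ hC hmean hvariance hexpansion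
  simp only [LinearMap.sub_apply, LinearMap.mulLeft_apply, LinearMap.mulRight_apply] at hmaster
  exact hmaster

/-- **Theorem 1 (classical simulation of a dephasing channel).**
Gaussian averaging of unitary conjugations `e^{-iξτH} ρ₀ e^{iξτH}`, with the
frequency `ξ` drawn from the normal density `(2πσ(τ)²)^{-1/2} exp(-(ξ-μ(τ))²/(2σ(τ)²))`,
yields a state obeying a master equation with effective frequency
`ω(τ) = μ(τ) + τ μ'(τ)` and effective dephasing rate
`Γ(τ) = 2 σ(τ)² τ (1 + τ σ'(τ)/σ(τ))`. -/
theorem gaussian_mixture_of_unitaries_master_equation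
    (n : ℕ) (hn : 1 ≤ n)
    (H ρ₀ : Matrix (Fin n) (Fin n) ℂ) (hH : H.IsHermitian)
    (μ σ μ' σ' : ℝ → ℝ)
    (hμ : ∀ τ > (0 : ℝ), HasDerivAt μ (μ' τ) τ)
    (hσ : ∀ τ > (0 : ℝ), HasDerivAt σ (σ' τ) τ)
    (hσpos : ∀ τ > (0 : ℝ), 0 < σ τ)
    (ρ : ℝ → Matrix (Fin n) (Fin n) ℂ)
    (hρ : ∀ τ > (0 : ℝ), ρ τ =
      ∫ ξ : ℝ,
        ((Real.sqrt (2 * Real.pi * (σ τ) ^ 2))⁻¹ *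
            Real.exp (-(ξ - μ τ) ^ 2 / (2 * (σ τ) ^ 2))) •
          (NormedSpace.exp ((-(Complex.I) * (ξ : ℂ) * (τ : ℂ)) • H) * ρ₀ *
            NormedSpace.exp ((Complex.I * (ξ : ℂ) * (τ : ℂ)) • H)))
    (ω Γ : ℝ → ℝ)
    (hω : ∀ τ > (0 : ℝ), ω τ = μ τ + τ * μ' τ)
    (hΓ : ∀ τ > (0 : ℝ), Γ τ = 2 * (σ τ) ^ 2 * τ * (1 + τ * σ' τ / σ τ)) :
    ∀ τ > (0 : ℝ),
      HasDerivAt ρ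
        ((-(Complex.I) * (ω τ : ℂ)) • (H * ρ τ - ρ τ * H) -
          ((Γ τ : ℂ) / 2) •
            (H * (H * ρ τ - ρ τ * H) - (H * ρ τ - ρ τ * H) * H)) τ :=
  gaussian_mixture_of_unitaries_master_equation_general n H ρ₀ hH μ σ μ' σ' hμ hσ hσpos ρ hρ ω Γ hω
    hΓ
end

section
/- Let V_P, V_Q, g > 0. Set S = √(V_P(4V_Q + V_P g²)) and ρ = (2V_Q + g(V_P g + S))/(2V_Q + g(V_P g − S)), noting that 2V_Q + g(V_P g − S) > 0 so that ρ > 1. Define the sequence (V_k)_{k≥1} by V₁ = V_P + V_Q/g² and V_{k+1} = V_P + V_Q V_k/(V_Q + g² V_k). Then for every k ≥ 1, V_k = V_P/2 + (S/(2g)) · (1 + 2/(ρ^k − 1)). -/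
/-!
The map `x ↦ V_P + V_Q x / (V_Q + g² x)` is a Möbius transformation with fixed points
`V_P/2 ± S/(2g)`. In the coordinate `r` given by `x = V_P/2 + S/(2g) (1 + 2/(r - 1))` it
becomes the dilation `r ↦ ρ r`, and `V₁` sits at `r = ρ` (the infinitely wide prior `V₀ = ∞`
sits at `r = 1`), so `V_k` sits at `r = ρ^k`. Writing `ρ = α / β`, the identity
`α β = 4 V_Q²` shows `β > 0`, and `α - β = 2 g S` then gives `ρ > 1`.
-/

namespace VarianceRecurrence

noncomputable def chart (VP g S r : ℝ) : ℝ :=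
  VP / 2 + S / (2 * g) * (1 + 2 / (r - 1))

variable {VP VQ g S α β : ℝ}

lemma mul_eq_four_mul_sq (hS : S ^ 2 = VP * (4 * VQ + VP * g ^ 2))
    (hα : α = 2 * VQ + g * (VP * g + S)) (hβ : β = 2 * VQ + g * (VP * g - S)) :
    α * β = 4 * VQ ^ 2 := by
  subst hα hβ
  linear_combination (-g ^ 2) * hS

lemma chart_div (hg : g ≠ 0) (hS : S ≠ 0)
    (hα : α = 2 * VQ + g * (VP * g + S)) (hβ : β = 2 * VQ + g * (VP * g - S)) (hb : β ≠ 0) :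
    chart VP g S (α / β) = VP + VQ / g ^ 2 := by
  have hρ : α / β - 1 = 2 * g * S / β := by
    rw [div_sub_one hb, hα, hβ]; ring
  rw [chart, hρ]
  field_simp
  rw [hβ]
  ring

lemma chart_step (hg : g ≠ 0) (hS : S ^ 2 = VP * (4 * VQ + VP * g ^ 2))
    (hα : α = 2 * VQ + g * (VP * g + S)) (hβ : β = 2 * VQ + g * (VP * g - S)) (hb : β ≠ 0)
    {r : ℝ} (hr : r - 1 ≠ 0) (hN : r * α - β ≠ 0) :
    VP + VQ * chart VP g S r / (VQ + g ^ 2 * chart VP g S r) = chart VP g S (r * (α / β)) := by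
  have hD : VQ + g ^ 2 * chart VP g S r = (r * α - β) / (2 * (r - 1)) := by
    rw [chart, hα, hβ]; field_simp; ring
  have hρr : r * (α / β) - 1 = (r * α - β) / β := by
    rw [mul_div_assoc', div_sub_one hb]
  rw [hD, chart, chart, hρr]
  field_simp
  subst hα hβ
  linear_combination (g * (1 - r)) * hS

end VarianceRecurrence

open VarianceRecurrence in
/-- **Closed-form solution (Eq. E.15)** of the variance recurrence
`V_{k+1} = V_P + V_Q V_k/(V_Q + g² V_k)` with `V₁ = V_P + V_Q/g²`, in terms of
`S = √(V_P(4V_Q + V_P g²))` and `ρ = (2V_Q + g(V_P g + S))/(2V_Q + g(V_P g − S))`. -/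
theorem variance_recurrence_closed_form
    (VP VQ g : ℝ) (hVP : 0 < VP) (hVQ : 0 < VQ) (hg : 0 < g)
    (V : ℕ → ℝ)
    (hV1 : V 1 = VP + VQ / g ^ 2)
    (hVrec : ∀ k ≥ 1, V (k + 1) = VP + VQ * V k / (VQ + g ^ 2 * V k)) :
    0 < 2 * VQ + g * (VP * g - Real.sqrt (VP * (4 * VQ + VP * g ^ 2))) ∧
    1 < (2 * VQ + g * (VP * g + Real.sqrt (VP * (4 * VQ + VP * g ^ 2)))) /
        (2 * VQ + g * (VP * g - Real.sqrt (VP * (4 * VQ + VP * g ^ 2)))) ∧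
    ∀ k ≥ 1,
      V k = VP / 2 +
        (Real.sqrt (VP * (4 * VQ + VP * g ^ 2)) / (2 * g)) *
          (1 + 2 /
            (((2 * VQ + g * (VP * g + Real.sqrt (VP * (4 * VQ + VP * g ^ 2)))) /
                (2 * VQ + g * (VP * g - Real.sqrt (VP * (4 * VQ + VP * g ^ 2))))) ^ k
              - 1)) := by
  set S := Real.sqrt (VP * (4 * VQ + VP * g ^ 2))
  have hS_pos : 0 < S := Real.sqrt_pos.mpr (by positivity)
  have hS : S ^ 2 = VP * (4 * VQ + VP * g ^ 2) := Real.sq_sqrt (by positivity)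
  set α := 2 * VQ + g * (VP * g + S)
  set β := 2 * VQ + g * (VP * g - S)
  have hα : 0 < α := by positivity
  have hβ : 0 < β :=
    pos_of_mul_pos_right (by rw [mul_eq_four_mul_sq hS rfl rfl]; positivity) hα.le
  have hρ : 1 < α / β := (one_lt_div hβ).mpr (by nlinarith)
  refine ⟨hβ, hρ, fun k hk => ?_⟩
  induction k, hk using Nat.le_induction with
  | base => rw [pow_one, hV1]; exact (chart_div hg.ne' hS_pos.ne' rfl rfl hβ.ne').symm
  | succ n hn ih =>
    have hρn : 1 < (α / β) ^ n := one_lt_pow₀ hρ (by omega)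
    have hN : (α / β) ^ n * α - β ≠ 0 := by nlinarith
    rw [hVrec n hn, ih, pow_succ (α / β) n]
    exact chart_step hg.ne' hS rfl rfl hβ.ne' (by linarith) hN
end

section
/- Let t, χ, q, γ, g > 0. For each integer k ≥ 1 set δ = t/k, V_P(k) = (q/(2χ)) (1 − e^{−2χδ}) and V_Q(k) = γ/δ, and let V_k^{(k)} denote the k-th term of the sequence defined by V₁ = V_P(k) + V_Q(k)/g² and V_{j+1} = V_P(k) + V_Q(k) V_j/(V_Q(k) + g² V_j). Then lim_{k→∞} V_k^{(k)} = (√(γ q)/g) · coth(t g √(q/γ)). -/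
open Filter

/-- The sequence defined by `V₁ = V_P + V_Q/g²` and
`V_{j+1} = V_P + V_Q V_j/(V_Q + g² V_j)` for `j ≥ 1` (the value at index `0` is
irrelevant). -/
noncomputable def varianceSeq (VP VQ g : ℝ) : ℕ → ℝ
  | 0 => 0
  | 1 => VP + VQ / g ^ 2
  | (j + 2) => VP + VQ * varianceSeq VP VQ g (j + 1) / (VQ + g ^ 2 * varianceSeq VP VQ g (j + 1))

/-! The recurrence `V ↦ V_P + V_Q V / (V_Q + g² V)` is a Möbius map, and the substitution
`g² V_P = 2 V_Q (cosh μ - 1)` turns its iterates into `V_n = V_P / 2 + (V_Q sinh μ / g²) coth (n μ)`.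
Solving for `μ` gives `μ = arsinh (g √z / V_Q)` with `z = V_P V_Q + (g V_P / 2)²`. As the step
`δ = t/k` shrinks, `V_P → 0` and `V_P V_Q → γ q` (the derivative of `1 - e^{-2χδ}` at `0`), so
`z → γ q`, and since `arsinh x ~ x`, `k μ ~ k g √z / V_Q = g t √z / γ → t g √(q/γ)`. -/

open Topology Real

theorem varianceSeq_succ_succ (VP VQ g : ℝ) (j : ℕ) :
    varianceSeq VP VQ g (j + 2) =
      VP + VQ * varianceSeq VP VQ g (j + 1) / (VQ + g ^ 2 * varianceSeq VP VQ g (j + 1)) :=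
  rfl

theorem varianceSeq_eq_of_cosh {VP VQ g μ : ℝ} (hVQ : VQ ≠ 0) (hg : g ≠ 0) (hμ : μ ≠ 0)
    (hVP : g ^ 2 * VP = 2 * VQ * (cosh μ - 1)) (n : ℕ) :
    varianceSeq VP VQ g (n + 1) =
      VP / 2 + VQ * sinh μ / g ^ 2 * (cosh ((n + 1 : ℕ) * μ) / sinh ((n + 1 : ℕ) * μ)) := by
  have hsinh (m : ℕ) : sinh ((m + 1 : ℕ) * μ) ≠ 0 :=
    sinh_ne_zero.2 (mul_ne_zero (by positivity) hμ)
  induction n with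
  | zero =>
    have := hsinh 0
    simp only [varianceSeq, zero_add, Nat.cast_one, one_mul] at this ⊢
    field_simp
    linear_combination hVP
  | succ n ih =>
    have hS := hsinh n
    have hS' := hsinh (n + 1)
    have hcast : ((n + 1 + 1 : ℕ) : ℝ) * μ = (n + 1 : ℕ) * μ + μ := by push_cast; ring
    rw [hcast, sinh_add] at hS'
    rw [varianceSeq_succ_succ, ih, hcast, sinh_add, cosh_add]
    generalize ((n + 1 : ℕ) : ℝ) * μ = x at hS hS' ⊢
    have hden : VQ + g ^ 2 * (VP / 2 + VQ * sinh μ / g ^ 2 * (cosh x / sinh x)) =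
        VQ * (sinh x * cosh μ + cosh x * sinh μ) / sinh x := by
      field_simp
      linear_combination sinh x * hVP
    rw [hden]
    rw [mul_comm (cosh x)] at hS'
    field_simp
    linear_combination (sinh x * cosh μ + sinh μ * cosh x + sinh x) * hVP +
      2 * VQ * sinh x * cosh_sq_sub_sinh_sq μ

theorem varianceSeq_eq_coth {VP VQ g : ℝ} (hVP : 0 < VP) (hVQ : 0 < VQ) (hg : g ≠ 0) (n : ℕ) :
    varianceSeq VP VQ g (n + 1) = VP / 2 + √(VP * VQ + (g * VP / 2) ^ 2) / g *
      (cosh ((n + 1 : ℕ) * arsinh (g * √(VP * VQ + (g * VP / 2) ^ 2) / VQ)) /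
        sinh ((n + 1 : ℕ) * arsinh (g * √(VP * VQ + (g * VP / 2) ^ 2) / VQ))) := by
  set z := VP * VQ + (g * VP / 2) ^ 2
  have hz : 0 < z := by positivity
  set x := g * √z / VQ
  have hx : x ≠ 0 := by positivity
  have hx_sq : 1 + x ^ 2 = (1 + g ^ 2 * VP / (2 * VQ)) ^ 2 := by
    simp only [x]
    rw [div_pow, mul_pow, sq_sqrt hz.le]
    simp only [z]
    field_simp
    ring
  have hcosh : g ^ 2 * VP = 2 * VQ * (cosh (arsinh x) - 1) := by
    rw [cosh_arsinh, hx_sq, sqrt_sq (by positivity)]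
    field_simp
    ring
  rw [varianceSeq_eq_of_cosh hVQ.ne' hg (arsinh_eq_zero_iff.not.2 hx) hcosh, sinh_arsinh]
  congr 2
  simp only [x]
  field_simp

theorem HasDerivAt.tendsto_dslope {α : Type*} {l : Filter α} {f : ℝ → ℝ} {f' a : ℝ} {u : α → ℝ}
    (hf : HasDerivAt f f' a) (hu : Tendsto u l (𝓝 a)) :
    Tendsto (fun i => dslope f a (u i)) l (𝓝 f') := by
  have := (continuousAt_dslope_same.2 hf.differentiableAt).tendsto.comp hu
  rwa [dslope_same, hf.deriv] at this

theorem tendsto_varianceSeq {VP VQ : ℕ → ℝ} {g P c : ℝ} (hg : g ≠ 0) (hP : 0 < P) (hc : c ≠ 0)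
    (hVP_pos : ∀ᶠ k in atTop, 0 < VP k) (hVQ_pos : ∀ᶠ k in atTop, 0 < VQ k)
    (hVP : Tendsto VP atTop (𝓝 0)) (hprod : Tendsto (fun k => VP k * VQ k) atTop (𝓝 P))
    (hratio : Tendsto (fun k => k / VQ k) atTop (𝓝 c)) :
    Tendsto (fun k => varianceSeq (VP k) (VQ k) g k) atTop
      (𝓝 (√P / g * (cosh (g * c * √P) / sinh (g * c * √P)))) := by
  set z := fun k => VP k * VQ k + (g * VP k / 2) ^ 2
  have hz : Tendsto (fun k => √(z k)) atTop (𝓝 √P) := by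
    convert (hprod.add (((hVP.const_mul g).div_const 2).pow 2)).sqrt using 2
    simp
  set x := fun k => g * √(z k) / VQ k
  have hkx : Tendsto (fun k : ℕ => k * x k) atTop (𝓝 (g * c * √P)) := by
    rw [mul_right_comm]
    exact ((hz.const_mul g).mul hratio).congr fun k => mul_div_left_comm _ _ _
  have hx : Tendsto x atTop (𝓝 0) := by
    refine (hkx.div_atTop tendsto_natCast_atTop_atTop).congr' ?_
    filter_upwards [eventually_ne_atTop 0] with k hk
    field_simp
  have hμ : Tendsto (fun k : ℕ => k * arsinh (x k)) atTop (𝓝 (g * c * √P)) := by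
    -- `arsinh y = y * dslope arsinh 0 y` holds for every `y`, so no need for `x k ≠ 0`.
    have h := hkx.mul ((hasDerivAt_arsinh 0).tendsto_dslope hx)
    simp only [ne_eq, OfNat.ofNat_ne_zero, not_false_eq_true, zero_pow, add_zero, sqrt_one,
      inv_one, mul_one] at h
    refine h.congr fun k => ?_
    have := sub_smul_dslope arsinh 0 (x k)
    simp only [sub_zero, smul_eq_mul, arsinh_zero] at this
    rw [mul_assoc, this]
  have hsinh : sinh (g * c * √P) ≠ 0 := by positivity
  have hlim := (hVP.div_const 2).add ((hz.div_const g).mul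
    (((continuous_cosh.tendsto _).comp hμ).div ((continuous_sinh.tendsto _).comp hμ) hsinh))
  rw [zero_div, zero_add] at hlim
  refine hlim.congr' ?_
  filter_upwards [hVP_pos, hVQ_pos, eventually_ne_atTop 0] with k hVPk hVQk hk
  obtain ⟨n, rfl⟩ := Nat.exists_eq_succ_of_ne_zero hk
  exact (varianceSeq_eq_coth hVPk hVQk hg n).symm

/-- **Continuous-time limit (Eq. E.16)** of the Gaussian variance recurrence of
Lemma E.1: discretising time into `k` steps of length `δ = t/k`, with transition
variance `V_P = (q/(2χ))(1 − e^{−2χδ})` of the Ornstein–Uhlenbeck process and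
mixing variance `V_Q = γ/δ`, the variance after `k` steps converges to
`√(γq)/g · coth(t g √(q/γ))` as the step size goes to zero. -/
theorem variance_recurrence_continuum_limit
    (t χ q γ g : ℝ) (ht : 0 < t) (hχ : 0 < χ) (hq : 0 < q) (hγ : 0 < γ) (hg : 0 < g) :
    Tendsto (fun k : ℕ =>
        varianceSeq ((q / (2 * χ)) * (1 - Real.exp (-2 * χ * (t / k)))) (γ / (t / k)) g k)
      atTop
      (nhds ((Real.sqrt (γ * q) / g) *
        (Real.cosh (t * g * Real.sqrt (q / γ)) / Real.sinh (t * g * Real.sqrt (q / γ))))) := by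
  have hδ : Tendsto (fun k : ℕ => t / k) atTop (𝓝 0) := tendsto_const_div_atTop_nhds_zero_nat t
  have hδ_pos : ∀ᶠ k : ℕ in atTop, 0 < t / k := by
    filter_upwards [eventually_gt_atTop 0] with k hk
    positivity
  have hslope : HasDerivAt (fun d => 1 - exp (-2 * χ * d)) (2 * χ) 0 := by
    simpa using (((hasDerivAt_id (0 : ℝ)).const_mul (-2 * χ)).exp.const_sub 1)
  have harg : g * (t / γ) * √(γ * q) = t * g * √(q / γ) := by
    rw [show γ * q = γ ^ 2 * (q / γ) by field_simp, sqrt_mul (sq_nonneg γ), sqrt_sq hγ.le]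
    field_simp
  rw [← harg]
  refine tendsto_varianceSeq hg.ne' (by positivity) (by positivity) ?_ ?_ ?_ ?_ ?_
  · filter_upwards [hδ_pos] with k hk
    have : exp (-2 * χ * (t / k)) < 1 := exp_lt_one_iff.2 (by nlinarith)
    exact mul_pos (by positivity) (sub_pos.2 this)
  · filter_upwards [hδ_pos] with k hk using div_pos hγ hk
  · simpa using ((hδ.const_mul (-2 * χ)).rexp.const_sub 1).const_mul (q / (2 * χ))
  · have h := (hslope.tendsto_dslope hδ).const_mul (γ * q / (2 * χ))
    rw [div_mul_cancel₀ _ (by positivity)] at h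
    refine h.congr' ?_
    filter_upwards [eventually_ne_atTop 0] with k hk
    have hdslope := sub_smul_dslope (fun d => 1 - exp (-2 * χ * d)) 0 (t / k)
    simp only [sub_zero, smul_eq_mul, mul_zero, exp_zero, sub_self] at hdslope
    rw [← hdslope]
    field_simp
  · refine tendsto_const_nhds.congr' ?_
    filter_upwards [eventually_ne_atTop 0] with k hk
    field_simp
end

section
/- Let J, M, η, γ > 0, and set c = √(M γ η) and a = 2J√(M γ η). Define V(t) = (J/2) · (c·cosh(a t) + γ·sinh(a t)) / (c·cosh(a t) + M η·sinh(a t)) for t ≥ 0. Then V(0) = J/2, V satisfies the Riccati differential equation V'(t) = −4 M η · V(t)² + γ J² for every t ≥ 0, and lim_{t→∞} V(t) = (J/2)·√(γ/(M η)). -/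
open Filter Topology Real

/-!
The Riccati equation `V' = -k V² + m` is linearised by `V = u' / (k u)`, which turns it into
`u'' = k m u`. Here `k = 4Mη`, `m = γJ²` and `km = a²`, and `V = u' / (k u)` for
`u(t) = γ cosh(at) + c sinh(at)`, because `c² = Mγη`. This `u` is positive for `t ≥ 0`. Dividing
numerator and denominator of `V` by `cosh(at)` and using `tanh(at) → 1` gives the limit
`(J/2)(c + γ)/(c + Mη) = (J/2) c/(Mη)`.
-/

theorem Real.tendsto_tanh_atTop : Tendsto tanh atTop (𝓝 1) := by
  have hexp : Tendsto (fun x : ℝ => exp (-x) ^ 2) atTop (𝓝 0) := by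
    simpa using (tendsto_exp_atBot.comp tendsto_neg_atTop_atBot).pow 2
  have hlim := ((tendsto_const_nhds (x := (1 : ℝ))).sub hexp).div
    ((tendsto_const_nhds (x := (1 : ℝ))).add hexp) (by norm_num)
  norm_num at hlim
  refine hlim.congr fun x => ?_
  simp only [Pi.div_apply, tanh_eq, exp_neg]
  field_simp

theorem tendsto_mul_cosh_add_mul_sinh_div (p q r s : ℝ) {a : ℝ} (ha : 0 < a) (hrs : r + s ≠ 0) :
    Tendsto (fun t => (p * cosh (a * t) + q * sinh (a * t)) / (r * cosh (a * t) + s * sinh (a * t)))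
      atTop (𝓝 ((p + q) / (r + s))) := by
  have htanh : Tendsto (fun t => tanh (a * t)) atTop (𝓝 1) :=
    tendsto_tanh_atTop.comp (tendsto_id.const_mul_atTop ha)
  have hlim := ((tendsto_const_nhds (x := p)).add (htanh.const_mul q)).div
    ((tendsto_const_nhds (x := r)).add (htanh.const_mul s)) (by simpa using hrs)
  simp only [mul_one] at hlim
  refine hlim.congr fun t => ?_
  have hcosh := (cosh_pos (a * t)).ne'
  simp only [Pi.div_apply, tanh_eq_sinh_div_cosh]
  conv_rhs => rw [← div_div_div_cancel_right₀ hcosh]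
  congr 1 <;> field_simp

theorem mul_cosh_add_mul_sinh_pos {p q x : ℝ} (hp : 0 < p) (hq : 0 ≤ q) (hx : 0 ≤ x) :
    0 < p * cosh x + q * sinh x := by
  have := cosh_pos x
  have := sinh_nonneg_iff.mpr hx
  positivity

theorem hasDerivAt_mul_cosh_add_mul_sinh (p q a t : ℝ) :
    HasDerivAt (fun s => p * cosh (a * s) + q * sinh (a * s))
      (a * (q * cosh (a * t) + p * sinh (a * t))) t := by
  have hlin : HasDerivAt (fun s => a * s) a t := by simpa using (hasDerivAt_id t).const_mul a
  refine ((((hasDerivAt_cosh _).comp t hlin).const_mul p).add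
    (((hasDerivAt_sinh _).comp t hlin).const_mul q)).congr_deriv ?_
  ring

theorem HasDerivAt.riccati_of_linear {u u' : ℝ → ℝ} {k m t : ℝ} (hu : HasDerivAt u (u' t) t)
    (hu' : HasDerivAt u' (k * m * u t) t) (hk : k ≠ 0) (ht : u t ≠ 0) :
    HasDerivAt (fun s => u' s / (k * u s)) (-k * (u' t / (k * u t)) ^ 2 + m) t := by
  refine (hu'.div (hu.const_mul k) (mul_ne_zero hk ht)).congr_deriv ?_
  field_simp
  ring

theorem hasDerivAt_riccati_cosh_sinh {p q a k m : ℝ} (t : ℝ) (hkm : k * m = a ^ 2) (hk : k ≠ 0)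
    (ht : p * cosh (a * t) + q * sinh (a * t) ≠ 0) :
    HasDerivAt
      (fun s => a * (q * cosh (a * s) + p * sinh (a * s)) / (k * (p * cosh (a * s) + q * sinh (a * s))))
      (-k * (a * (q * cosh (a * t) + p * sinh (a * t)) /
        (k * (p * cosh (a * t) + q * sinh (a * t)))) ^ 2 + m) t := by
  have hu' := (hasDerivAt_mul_cosh_add_mul_sinh q p a t).const_mul a
  exact HasDerivAt.riccati_of_linear (u' := fun s => a * (q * cosh (a * s) + p * sinh (a * s)))
    (hasDerivAt_mul_cosh_add_mul_sinh p q a t) (hu'.congr_deriv (by rw [hkm]; ring)) hk ht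

/-- **Conditional variance with collective dephasing (Eq. B.5 regime).** With
`c = √(Mγη)` and `a = 2J√(Mγη)`, the function
`V(t) = (J/2)(c cosh(at) + γ sinh(at))/(c cosh(at) + Mη sinh(at))` satisfies
`V(0) = J/2`, the Riccati equation `V' = −4Mη V² + γJ²` for every `t ≥ 0`, and
`V(t) → (J/2)√(γ/(Mη))` as `t → ∞`. -/
theorem noisy_conditional_variance_riccati
    (J M η γ : ℝ) (hJ : 0 < J) (hM : 0 < M) (hη : 0 < η) (hγ : 0 < γ)
    (c a : ℝ) (hc : c = Real.sqrt (M * γ * η)) (ha : a = 2 * J * Real.sqrt (M * γ * η))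
    (V : ℝ → ℝ)
    (hV : ∀ t : ℝ, V t = (J / 2) *
      (c * Real.cosh (a * t) + γ * Real.sinh (a * t)) /
        (c * Real.cosh (a * t) + M * η * Real.sinh (a * t))) :
    V 0 = J / 2 ∧
    (∀ t : ℝ, 0 ≤ t → HasDerivAt V (-4 * M * η * (V t) ^ 2 + γ * J ^ 2) t) ∧
    Tendsto V atTop (nhds ((J / 2) * Real.sqrt (γ / (M * η)))) := by
  have hc0 : 0 < c := hc ▸ sqrt_pos.mpr (by positivity)
  have hcsq : c ^ 2 = M * γ * η := hc ▸ sq_sqrt (by positivity)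
  have hac : a = 2 * J * c := hc ▸ ha
  have hV_linearized : V = fun t => a * (c * cosh (a * t) + γ * sinh (a * t)) /
      (4 * M * η * (γ * cosh (a * t) + c * sinh (a * t))) := by
    funext t
    have hnum : a * (c * cosh (a * t) + γ * sinh (a * t))
        = 4 * c * (J / 2 * (c * cosh (a * t) + γ * sinh (a * t))) := by
      rw [hac]; ring
    have hden : 4 * M * η * (γ * cosh (a * t) + c * sinh (a * t))
        = 4 * c * (c * cosh (a * t) + M * η * sinh (a * t)) := by
      linear_combination -4 * cosh (a * t) * hcsq
    rw [hV, hnum, hden, mul_div_mul_left _ _ (by positivity)]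
  refine ⟨by simp [hV, hc0.ne'], fun t ht => ?_, ?_⟩
  · have hu := mul_cosh_add_mul_sinh_pos hγ hc0.le (by rw [hac]; positivity : 0 ≤ a * t)
    rw [hV_linearized]
    have hkm : 4 * M * η * (γ * J ^ 2) = a ^ 2 := by
      linear_combination -(a + 2 * J * c) * hac - 4 * J ^ 2 * hcsq
    exact (hasDerivAt_riccati_cosh_sinh t hkm (by positivity) hu.ne').congr_deriv (by ring)
  · have hlimit : (c + γ) / (c + M * η) = sqrt (γ / (M * η)) := by
      rw [eq_comm, sqrt_eq_iff_mul_self_eq_of_pos (by positivity)]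
      field_simp
      linear_combination (M * η - γ) * hcsq
    rw [funext hV, ← hlimit]
    simp_rw [mul_div_assoc]
    exact (tendsto_mul_cosh_add_mul_sinh_div c γ c (M * η) (by rw [hac]; positivity)
      (by positivity)).const_mul _
end

section
/- Let J, g, B, M, γ_x, γ_y, γ_z be real numbers with J > 0, g ≠ 0, B ≠ 0, and suppose (M − γ_x + γ_z)² > 16 g² B². Set Θ = √((M − γ_x + γ_z)² − 16 g² B²) and define J_x(t) = (J/(2Θ)) · e^{−(M + γ_x + 2γ_y + γ_z + Θ)t/4} · (M − γ_x + γ_z + Θ − e^{tΘ/2}(M − γ_x + γ_z − Θ)). Then there exists a differentiable function J_z : ℝ → ℝ with J_z(0) = 0 such that J_x(0) = J and, for all t, J_x'(t) = g B · J_z(t) − (1/2)(M + γ_y + γ_z) J_x(t) and J_z'(t) = −g B · J_x(t) − (1/2)(γ_x + γ_y) J_z(t). -/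
/-!
Both exponents `-(M + γx + 2γy + γz ± Θ)/4` are the eigenvalues of the coefficient matrix of
the system, and `J_x` is the first component of a combination of the two eigensolutions
`t ↦ e^{μt} (u, v)`; the second component of the same combination is the required `J_z`.
The eigenvector equations reduce to `Θ² = (M - γx + γz)² - 16 g² B²`.
-/

open Real

def SolvesLinearSystem (a b c d : ℝ) (x z : ℝ → ℝ) : Prop :=
  ∀ t, HasDerivAt x (a * x t + b * z t) t ∧ HasDerivAt z (c * x t + d * z t) t

namespace SolvesLinearSystem

variable {a b c d : ℝ} {x z x' z' : ℝ → ℝ}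

theorem of_eigenvector {μ u v : ℝ} (hu : a * u + b * v = μ * u) (hv : c * u + d * v = μ * v) :
    SolvesLinearSystem a b c d (fun t => u * exp (μ * t)) (fun t => v * exp (μ * t)) := by
  intro t
  have hexp : HasDerivAt (fun t => exp (μ * t)) (exp (μ * t) * μ) t := by
    simpa using ((hasDerivAt_id t).const_mul μ).exp
  exact ⟨(hexp.const_mul u).congr_deriv (by linear_combination -exp (μ * t) * hu),
    (hexp.const_mul v).congr_deriv (by linear_combination -exp (μ * t) * hv)⟩

theorem add (h : SolvesLinearSystem a b c d x z) (h' : SolvesLinearSystem a b c d x' z') :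
    SolvesLinearSystem a b c d (x + x') (z + z') := by
  intro t
  exact ⟨((h t).1.add (h' t).1).congr_deriv (by simp only [Pi.add_apply]; ring),
    ((h t).2.add (h' t).2).congr_deriv (by simp only [Pi.add_apply]; ring)⟩

end SolvesLinearSystem

theorem unconditional_Jx_exact_solution_general
    (J g B M γx γy γz : ℝ)
    (hdisc : (M - γx + γz) ^ 2 > 16 * g ^ 2 * B ^ 2)
    (Θ : ℝ) (hΘ : Θ = Real.sqrt ((M - γx + γz) ^ 2 - 16 * g ^ 2 * B ^ 2))
    (Jx : ℝ → ℝ)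
    (hJx : ∀ t : ℝ, Jx t = (J / (2 * Θ)) *
      Real.exp (-(M + γx + 2 * γy + γz + Θ) * t / 4) *
        (M - γx + γz + Θ - Real.exp (t * Θ / 2) * (M - γx + γz - Θ))) :
    ∃ Jz : ℝ → ℝ, Differentiable ℝ Jz ∧ Jz 0 = 0 ∧ Jx 0 = J ∧
      ∀ t : ℝ,
        HasDerivAt Jx (g * B * Jz t - (1 / 2) * (M + γy + γz) * Jx t) t ∧
        HasDerivAt Jz (-(g * B) * Jx t - (1 / 2) * (γx + γy) * Jz t) t := by
  have hΘpos : 0 < Θ := hΘ ▸ sqrt_pos.mpr (by linarith)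
  have hΘsq : Θ ^ 2 = (M - γx + γz) ^ 2 - 16 * g ^ 2 * B ^ 2 := by
    rw [hΘ, sq_sqrt (by linarith)]
  set K := M - γx + γz
  set S := M + γx + 2 * γy + γz
  set k := J / (2 * Θ)
  have hsol := (SolvesLinearSystem.of_eigenvector (a := -(1 / 2) * (M + γy + γz)) (b := g * B)
      (c := -(g * B)) (d := -(1 / 2) * (γx + γy)) (μ := -(S + Θ) / 4)
      (u := k * (K + Θ)) (v := k * (4 * g * B)) (by linear_combination k / 4 * hΘsq)
      (by ring)).add
    (SolvesLinearSystem.of_eigenvector (μ := -(S - Θ) / 4)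
      (u := -k * (K - Θ)) (v := -k * (4 * g * B)) (by linear_combination -k / 4 * hΘsq)
      (by ring))
  have hJx_eq : Jx = (fun t => k * (K + Θ) * exp (-(S + Θ) / 4 * t)) +
      fun t => -k * (K - Θ) * exp (-(S - Θ) / 4 * t) := by
    funext t
    have hplus : -(S + Θ) / 4 * t = -(S + Θ) * t / 4 := by ring
    have hminus : -(S - Θ) / 4 * t = -(S + Θ) * t / 4 + t * Θ / 2 := by ring
    rw [hJx, Pi.add_apply, hplus, hminus, exp_add]
    ring
  rw [hJx_eq]
  refine ⟨_, fun t => (hsol t).2.differentiableAt, by simp, ?_, fun t => ?_⟩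
  · simp only [Pi.add_apply, mul_zero, exp_zero, mul_one, k]
    field_simp
    ring
  obtain ⟨hx, hz⟩ := hsol t
  exact ⟨hx.congr_deriv (by ring), hz.congr_deriv (by ring)⟩

/-- **Appendix A exact solution for the unconditional mean spin ⟨Ĵ_x(t)⟩.**
With `Θ = √((M − γ_x + γ_z)² − 16g²B²)`, the explicit function `J_x` solves the
coupled linear system `J_x' = gB J_z − ½(M + γ_y + γ_z)J_x`,
`J_z' = −gB J_x − ½(γ_x + γ_y)J_z` with `J_x(0) = J`, `J_z(0) = 0`. -/
theorem unconditional_Jx_exact_solution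
    (J g B M γx γy γz : ℝ) (hJ : 0 < J) (hg : g ≠ 0) (hB : B ≠ 0)
    (hdisc : (M - γx + γz) ^ 2 > 16 * g ^ 2 * B ^ 2)
    (Θ : ℝ) (hΘ : Θ = Real.sqrt ((M - γx + γz) ^ 2 - 16 * g ^ 2 * B ^ 2))
    (Jx : ℝ → ℝ)
    (hJx : ∀ t : ℝ, Jx t = (J / (2 * Θ)) *
      Real.exp (-(M + γx + 2 * γy + γz + Θ) * t / 4) *
        (M - γx + γz + Θ - Real.exp (t * Θ / 2) * (M - γx + γz - Θ))) :
    ∃ Jz : ℝ → ℝ, Differentiable ℝ Jz ∧ Jz 0 = 0 ∧ Jx 0 = J ∧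
      ∀ t : ℝ,
        HasDerivAt Jx (g * B * Jz t - (1 / 2) * (M + γy + γz) * Jx t) t ∧
        HasDerivAt Jz (-(g * B) * Jx t - (1 / 2) * (γx + γy) * Jz t) t :=
  unconditional_Jx_exact_solution_general J g B M γx γy γz hdisc Θ hΘ Jx hJx
end

section
/- Let M, η, q, γ, g, J, t > 0, set r = M + γ, V = (J/2)·√(γ/(η M))·e^{−r t/2}, and z = √( qγ/g² + (1/(g J))·√(q³/(M η))·e^{r t/2} ). Then there exist real numbers x and y such that the following three equations hold simultaneously: −8 M η V x − 4 M η x² − 2 g J e^{−r t/2} y = 0; −4 M η V y − 4 M η x y − g J e^{−r t/2} z = 0; and q − 4 M η y² = 0. -/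
/-!
The third equation forces `y = -σ` with `4Mη σ² = q`; the second then fixes `x + V`, and the
first becomes the single condition `(gJe^{-rt/2})² z² = q (4MηV² + 2 gJe^{-rt/2} σ)`, which is
exactly what the closed forms of `V` and `z` give, with `σ = √(q/(Mη))/2`.
-/

theorem exists_solution_riccati_system {a b q V z σ : ℝ} (ha : a ≠ 0) (hσ : σ ≠ 0)
    (hq : a * σ ^ 2 = q) (hz : b ^ 2 * z ^ 2 = q * (a * V ^ 2 + 2 * b * σ)) :
    ∃ x y : ℝ, -2 * a * V * x - a * x ^ 2 - 2 * b * y = 0 ∧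
      -a * V * y - a * x * y - b * z = 0 ∧ q - a * y ^ 2 = 0 := by
  refine ⟨b * z / (a * σ) - V, -σ, ?_, ?_, ?_⟩
  · field_simp
    linear_combination (-1) * hz + (a * V ^ 2 + 2 * b * σ) * hq
  · field_simp
    ring
  · linear_combination -hq

theorem kalman_steady_state_algebraic_riccati_general
    (M η q γ g J t : ℝ)
    (hM : 0 < M) (hη : 0 < η) (hq : 0 < q) (hγ : 0 < γ) (hg : 0 < g) (hJ : 0 < J)
    (r V z : ℝ)
    (hV : V = (J / 2) * Real.sqrt (γ / (η * M)) * Real.exp (-r * t / 2))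
    (hz : z = Real.sqrt (q * γ / g ^ 2 +
      (1 / (g * J)) * Real.sqrt (q ^ 3 / (M * η)) * Real.exp (r * t / 2))) :
    ∃ x y : ℝ,
      -8 * M * η * V * x - 4 * M * η * x ^ 2 - 2 * g * J * Real.exp (-r * t / 2) * y = 0 ∧
      -4 * M * η * V * y - 4 * M * η * x * y - g * J * Real.exp (-r * t / 2) * z = 0 ∧
      q - 4 * M * η * y ^ 2 = 0 := by
  set E := Real.exp (-r * t / 2) with hE
  have hE0 : 0 < E := Real.exp_pos _
  have hEinv : Real.exp (r * t / 2) = E⁻¹ := by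
    rw [hE, neg_mul, neg_div, Real.exp_neg, inv_inv]
  set s := Real.sqrt (q / (M * η)) with hs
  have hs2 : M * η * s ^ 2 = q := by
    rw [hs, Real.sq_sqrt (by positivity)]
    field_simp
  have hV2 : 4 * M * η * V ^ 2 = γ * J ^ 2 * E ^ 2 := by
    rw [hV, mul_pow, mul_pow, Real.sq_sqrt (by positivity)]
    field_simp
    ring
  have hz2 : z ^ 2 = q * γ / g ^ 2 + q * s / (g * J * E) := by
    have hcube : Real.sqrt (q ^ 3 / (M * η)) = q * s := by
      rw [hs, show q ^ 3 / (M * η) = q ^ 2 * (q / (M * η)) by ring,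
        Real.sqrt_mul (by positivity), Real.sqrt_sq hq.le]
    rw [hz, Real.sq_sqrt (by positivity), hcube, hEinv]
    field_simp
  have hσ : 4 * M * η * (s / 2) ^ 2 = q := by linear_combination hs2
  have hcond : (g * J * E) ^ 2 * z ^ 2 = q * (4 * M * η * V ^ 2 + 2 * (g * J * E) * (s / 2)) := by
    rw [mul_pow, hz2, hV2]
    field_simp
  obtain ⟨x, y, h₁, h₂, h₃⟩ :=
    exists_solution_riccati_system (by positivity) (by positivity) hσ hcond
  exact ⟨x, y, by linear_combination h₁, by linear_combination h₂, by linear_combination h₃⟩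

/-- **Steady state of the Kalman filter for a Wiener-process field.** With
`r = M + γ`, `V = (J/2)√(γ/(ηM)) e^{−rt/2}` and
`z = √(qγ/g² + (1/(gJ))√(q³/(Mη)) e^{rt/2})`, there exist `x, y` solving the
continuous-time algebraic Riccati system obtained by setting the time derivative
of the Kalman covariance matrix to zero. -/
theorem kalman_steady_state_algebraic_riccati
    (M η q γ g J t : ℝ)
    (hM : 0 < M) (hη : 0 < η) (hq : 0 < q) (hγ : 0 < γ) (hg : 0 < g) (hJ : 0 < J) (ht : 0 < t)
    (r V z : ℝ) (hr : r = M + γ)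
    (hV : V = (J / 2) * Real.sqrt (γ / (η * M)) * Real.exp (-r * t / 2))
    (hz : z = Real.sqrt (q * γ / g ^ 2 +
      (1 / (g * J)) * Real.sqrt (q ^ 3 / (M * η)) * Real.exp (r * t / 2))) :
    ∃ x y : ℝ,
      -8 * M * η * V * x - 4 * M * η * x ^ 2 - 2 * g * J * Real.exp (-r * t / 2) * y = 0 ∧
      -4 * M * η * V * y - 4 * M * η * x * y - g * J * Real.exp (-r * t / 2) * z = 0 ∧
      q - 4 * M * η * y ^ 2 = 0 :=
  kalman_steady_state_algebraic_riccati_general M η q γ g J t hM hη hq hγ hg hJ r V z hV hz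
end

section
/- Let M, η, g, J > 0 and define, for t > 0, f(t) = M² (1 + 2 J M t η) / (16 η g² J² · D(t)) where D(t) = a(t) e^{−M t} + 4(1 + 4Jη) e^{−M t/2} + c(t), a(t) = −(1 + 2ηJ(4 + M t)), and c(t) = (M t − 3) + 2ηJ(M t − 4). Then lim_{t→0⁺} t³ · f(t) = 3/(4 η M g² J²). -/
open Filter

lemma exp_cubic_bound {y : ℝ} (hy : |y| ≤ 1) :
    |Real.exp y - (1 + y + y ^ 2 / 2 + y ^ 3 / 6)| ≤ |y| ^ 4 * (5 / 96) := by
  have h := Real.exp_bound hy (n := 4) (by norm_num)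
  have hs : ∑ m ∈ Finset.range 4, y ^ m / m.factorial = 1 + y + y ^ 2 / 2 + y ^ 3 / 6 := by
    norm_num [Finset.sum_range_succ, Nat.factorial]
  rw [hs] at h
  calc |Real.exp y - (1 + y + y ^ 2 / 2 + y ^ 3 / 6)|
      ≤ |y| ^ 4 * ((4 : ℕ).succ / ((4 : ℕ).factorial * 4)) := h
    _ = |y| ^ 4 * (5 / 96) := by norm_num [Nat.factorial]

/-- **Short-time Heisenberg-limited asymptotics (Eq. HS_approx(a)).** For the
exact noiseless Kalman-filter error `f(t)`, one has
`t³ f(t) → 3/(4ηMg²J²)` as `t → 0⁺`. -/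
theorem noiseless_error_short_time_asymptotics
    (M η g J : ℝ) (hM : 0 < M) (hη : 0 < η) (hg : 0 < g) (hJ : 0 < J)
    (f : ℝ → ℝ)
    (hf : ∀ t > (0 : ℝ), f t =
      M ^ 2 * (1 + 2 * J * M * t * η) /
        (16 * η * g ^ 2 * J ^ 2 *
          (-(1 + 2 * η * J * (4 + M * t)) * Real.exp (-M * t) +
            4 * (1 + 4 * J * η) * Real.exp (-M * t / 2) +
            ((M * t - 3) + 2 * η * J * (M * t - 4)))) ) :
    Tendsto (fun t : ℝ => t ^ 3 * f t) (nhdsWithin 0 (Set.Ioi 0))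
      (nhds (3 / (4 * η * M * g ^ 2 * J ^ 2))) := by
  set c0 : ℝ := 16 * η * g ^ 2 * J ^ 2 with hc0
  set D : ℝ → ℝ := fun t =>
      -(1 + 2 * η * J * (4 + M * t)) * Real.exp (-M * t) +
        4 * (1 + 4 * J * η) * Real.exp (-M * t / 2) +
        ((M * t - 3) + 2 * η * J * (M * t - 4)) with hD
  set N : ℝ → ℝ := fun t => M ^ 2 * (1 + 2 * J * M * t * η) with hN
  set E : ℝ → ℝ := fun t => D t - ((M * t) ^ 3 / 12 + η * J * (M * t) ^ 4 / 3) with hE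
  set K : ℝ := ((1 + 10 * η * J) + 4 * (1 + 4 * J * η)) * (5 / 96) * M ^ 4 with hK
  -- identity expressing E via exp remainders
  have hEid : ∀ t : ℝ, E t =
      (-(1 + 2 * η * J * (4 + M * t))) *
        (Real.exp (-M * t) - (1 + (-M * t) + (-M * t) ^ 2 / 2 + (-M * t) ^ 3 / 6)) +
      (4 * (1 + 4 * J * η)) *
        (Real.exp (-M * t / 2) - (1 + (-M * t / 2) + (-M * t / 2) ^ 2 / 2 + (-M * t / 2) ^ 3 / 6)) := by
    intro t
    simp only [hE, hD]
    ring
  -- the squeeze bound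
  have hEbound : ∀ t ∈ Set.Ioo (0 : ℝ) (1 / M), |E t / t ^ 3| ≤ K * t := by
    intro t ht
    obtain ⟨ht0, ht1⟩ := ht
    have hMt0 : 0 ≤ M * t := by positivity
    have hMt1 : M * t ≤ 1 := by
      rw [← le_div_iff₀' hM] at *; linarith [ht1.le]
    have hy1 : |(-M * t)| ≤ 1 := by
      rw [abs_le]; constructor <;> nlinarith
    have hy2 : |(-M * t / 2)| ≤ 1 := by
      rw [abs_le]; constructor <;> nlinarith
    have h1 := exp_cubic_bound hy1
    have h2 := exp_cubic_bound hy2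
    have ha1 : |(-M * t)| = M * t := by
      rw [show -M * t = -(M * t) by ring, abs_neg, abs_of_nonneg hMt0]
    have ha2 : |(-M * t / 2)| = M * t / 2 := by
      rw [show -M * t / 2 = -(M * t / 2) by ring, abs_neg, abs_of_nonneg (by positivity)]
    rw [ha1] at h1
    rw [ha2] at h2
    have hA : |(-(1 + 2 * η * J * (4 + M * t)))| ≤ 1 + 10 * η * J := by
      rw [abs_neg, abs_of_nonneg (by positivity)]
      nlinarith [mul_pos hη hJ]
    have hB : |(4 * (1 + 4 * J * η))| = 4 * (1 + 4 * J * η) := abs_of_nonneg (by positivity)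
    have hEt : |E t| ≤ K * t ^ 4 := by
      rw [hEid t]
      calc |(-(1 + 2 * η * J * (4 + M * t))) *
            (Real.exp (-M * t) - (1 + (-M * t) + (-M * t) ^ 2 / 2 + (-M * t) ^ 3 / 6)) +
          (4 * (1 + 4 * J * η)) *
            (Real.exp (-M * t / 2) - (1 + (-M * t / 2) + (-M * t / 2) ^ 2 / 2 + (-M * t / 2) ^ 3 / 6))|
          ≤ |(-(1 + 2 * η * J * (4 + M * t)))| *
            |Real.exp (-M * t) - (1 + (-M * t) + (-M * t) ^ 2 / 2 + (-M * t) ^ 3 / 6)| +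
          |(4 * (1 + 4 * J * η))| *
            |Real.exp (-M * t / 2) - (1 + (-M * t / 2) + (-M * t / 2) ^ 2 / 2 + (-M * t / 2) ^ 3 / 6)| := by
            refine (abs_add_le _ _).trans ?_
            rw [abs_mul, abs_mul]
        _ ≤ (1 + 10 * η * J) * ((M * t) ^ 4 * (5 / 96)) +
            (4 * (1 + 4 * J * η)) * ((M * t / 2) ^ 4 * (5 / 96)) := by
            refine add_le_add (mul_le_mul hA h1 (abs_nonneg _) (by positivity)) ?_
            rw [hB]
            exact mul_le_mul_of_nonneg_left h2 (by positivity)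
        _ ≤ K * t ^ 4 := by
            rw [hK]
            nlinarith [mul_nonneg (show (0:ℝ) ≤ 1 + 4 * J * η by positivity)
              (show (0:ℝ) ≤ M ^ 4 * t ^ 4 by positivity)]
    have ht3 : (0:ℝ) < t ^ 3 := by positivity
    rw [abs_div, abs_of_pos ht3]
    rw [div_le_iff₀ ht3]
    calc |E t| ≤ K * t ^ 4 := hEt
      _ = K * t * t ^ 3 := by ring
  -- limit of the remainder over t^3
  have hmemIoo : Set.Ioo (0:ℝ) (1 / M) ∈ nhdsWithin (0:ℝ) (Set.Ioi 0) :=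
    Ioo_mem_nhdsGT_of_mem ⟨le_refl 0, by positivity⟩
  have hKt : Tendsto (fun t : ℝ => K * t) (nhdsWithin 0 (Set.Ioi 0)) (nhds 0) := by
    have : Tendsto (fun t : ℝ => K * t) (nhds 0) (nhds (K * 0)) :=
      (continuous_const.mul continuous_id).tendsto 0
    rw [mul_zero] at this
    exact this.mono_left nhdsWithin_le_nhds
  have hE3 : Tendsto (fun t : ℝ => E t / t ^ 3) (nhdsWithin 0 (Set.Ioi 0)) (nhds 0) := by
    refine squeeze_zero_norm' ?_ hKt
    filter_upwards [hmemIoo] with t ht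
    simpa [Real.norm_eq_abs, abs_div, abs_pow] using hEbound t ht
  have hPoly : Tendsto (fun t : ℝ => M ^ 3 / 12 + η * J * M ^ 4 * t / 3)
      (nhdsWithin 0 (Set.Ioi 0)) (nhds (M ^ 3 / 12)) := by
    have : Tendsto (fun t : ℝ => M ^ 3 / 12 + η * J * M ^ 4 * t / 3) (nhds 0)
        (nhds (M ^ 3 / 12 + η * J * M ^ 4 * 0 / 3)) := by
      exact (continuous_const.add ((continuous_const.mul continuous_id).div_const 3)).tendsto 0
    rw [show M ^ 3 / 12 + η * J * M ^ 4 * 0 / 3 = M ^ 3 / 12 by ring] at this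
    exact this.mono_left nhdsWithin_le_nhds
  have hD3 : Tendsto (fun t : ℝ => D t / t ^ 3) (nhdsWithin 0 (Set.Ioi 0)) (nhds (M ^ 3 / 12)) := by
    have hsum := hE3.add hPoly
    rw [zero_add] at hsum
    refine hsum.congr' ?_
    filter_upwards [self_mem_nhdsWithin] with t (ht : 0 < t)
    have ht0 : t ≠ 0 := ne_of_gt ht
    have : D t = E t + ((M * t) ^ 3 / 12 + η * J * (M * t) ^ 4 / 3) := by
      simp only [hE]; ring
    rw [this, add_div]
    congr 1
    field_simp
  -- final combination
  have hNum : Tendsto N (nhdsWithin 0 (Set.Ioi 0)) (nhds (M ^ 2)) := by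
    have : Tendsto N (nhds 0) (nhds (N 0)) := by
      exact (continuous_const.mul (continuous_const.add
        ((continuous_const.mul continuous_id).mul continuous_const))).tendsto 0
    rw [show N 0 = M ^ 2 by simp [hN]] at this
    exact this.mono_left nhdsWithin_le_nhds
  have hc0pos : 0 < c0 := by rw [hc0]; positivity
  have hne : c0 * (M ^ 3 / 12) ≠ 0 := by positivity
  have hDen : Tendsto (fun t : ℝ => c0 * (D t / t ^ 3)) (nhdsWithin 0 (Set.Ioi 0))
      (nhds (c0 * (M ^ 3 / 12))) := tendsto_const_nhds.mul hD3
  have hquot := hNum.div hDen hne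
  have hval : M ^ 2 / (c0 * (M ^ 3 / 12)) = 3 / (4 * η * M * g ^ 2 * J ^ 2) := by
    rw [hc0]
    field_simp
    ring
  rw [hval] at hquot
  refine hquot.congr' ?_
  filter_upwards [self_mem_nhdsWithin] with t (ht : 0 < t)
  simp only [Pi.div_apply]
  rw [hf t ht]
  show N t / (c0 * (D t / t ^ 3)) = t ^ 3 * (N t / (c0 * D t))
  rw [show c0 * (D t / t ^ 3) = c0 * D t / t ^ 3 from (mul_div_assoc _ _ _).symm,
    div_div_eq_mul_div, mul_comm (N t) (t ^ 3), mul_div_assoc]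
end

section
/- Let M, η, g, t > 0 and define, for J > 0, f(t, J) = M² (1 + 2 J M t η) / (16 η g² J² · D(t, J)) where D(t, J) = a(t, J) e^{−M t} + 4(1 + 4Jη) e^{−M t/2} + c(t, J), a(t, J) = −(1 + 2ηJ(4 + M t)), and c(t, J) = (M t − 3) + 2ηJ(M t − 4). Set h(x) = −(4 + x)e^{−x} + 8 e^{−x/2} + x − 4. Then lim_{J→∞} J² · f(t, J) = M³ t / (16 η g² h(M t)), and furthermore lim_{t→0⁺} t³ · M³ t/(16 η g² h(M t)) = 3/(η M g²). -/
open Filter Topology Real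

/-! Substituting `x = Mt`, the denominator `D(t, J)` is affine in `J` with slope `2η h(Mt)`, so
`J² f(t, J)` is a ratio of two affine functions of `J` and converges to the ratio of their slopes,
provided `h(Mt) ≠ 0`. Positivity of `h` on `(0, ∞)` follows from `h(0) = h'(0) = 0` and
`h''(x) = e^{-x/2} (2 - (2 + x) e^{-x/2}) > 0`. For small times, four applications of l'Hôpital's
rule give `h(x) / x⁴ → h⁗(0) / 4! = 1/48`. All derivatives of `h` are of the form
`(a + bx) e^{-x} + c e^{-x/2} + d + ex`, a family closed under differentiation. -/

noncomputable def expPoly (a b c d e x : ℝ) : ℝ :=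
  (a + b * x) * exp (-x) + c * exp (-x / 2) + (d + e * x)

lemma expPoly_zero (a b c d e : ℝ) : expPoly a b c d e 0 = a + c + d := by
  simp [expPoly]

lemma hasDerivAt_expPoly (a b c d e x : ℝ) :
    HasDerivAt (expPoly a b c d e) (expPoly (b - a) (-b) (-c / 2) e 0 x) x := by
  have hexp : HasDerivAt (fun x : ℝ => exp (-x)) (-exp (-x)) x := by
    simpa using (hasDerivAt_neg x).exp
  have hexp_half : HasDerivAt (fun x : ℝ => exp (-x / 2)) (-exp (-x / 2) / 2) x := by
    convert ((hasDerivAt_neg x).div_const 2).exp using 1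
    ring
  have hlin (p q : ℝ) : HasDerivAt (fun x : ℝ => p + q * x) q x := by
    simpa using ((hasDerivAt_id x).const_mul q).const_add p
  refine ((((hlin a b).mul hexp).add (hexp_half.const_mul c)).add (hlin d e)).congr_deriv ?_
  simp only [expPoly]
  ring

lemma tendsto_div_pow_succ_of_hasDerivAt {F F' : ℝ → ℝ} {n : ℕ} {L : ℝ}
    (hF : ∀ x, HasDerivAt F (F' x) x) (hF0 : F 0 = 0)
    (hlim : Tendsto (fun x => F' x / x ^ n) (𝓝[>] 0) (𝓝 L)) :
    Tendsto (fun x => F x / x ^ (n + 1)) (𝓝[>] 0) (𝓝 (L / (n + 1))) := by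
  refine HasDerivAt.lhopital_zero_nhdsGT (f' := F') (g' := fun x => (n + 1) * x ^ n)
    (Eventually.of_forall hF) (Eventually.of_forall fun x => ?_) ?_ ?_ ?_ ?_
  · simpa [mul_comm] using hasDerivAt_pow (n + 1) x
  · filter_upwards [self_mem_nhdsWithin] with x (hx : 0 < x)
    positivity
  · simpa [hF0] using ((hF 0).continuousAt.tendsto).mono_left nhdsWithin_le_nhds
  · exact ((continuous_pow (n + 1)).tendsto' 0 0 (by simp)).mono_left nhdsWithin_le_nhds
  · refine (hlim.div_const (n + 1)).congr fun x => ?_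
    rw [div_div, mul_comm]

lemma pos_of_hasDerivAt_of_pos {F F' : ℝ → ℝ} (hF : ∀ x, HasDerivAt F (F' x) x) (hF0 : F 0 = 0)
    (hF' : ∀ x, 0 < x → 0 < F' x) {x : ℝ} (hx : 0 < x) : 0 < F x := by
  have hmono : StrictMonoOn F (Set.Ici 0) :=
    strictMonoOn_of_hasDerivWithinAt_pos (convex_Ici 0)
      (fun y _ => (hF y).continuousAt.continuousWithinAt) (fun y _ => (hF y).hasDerivWithinAt)
      (fun y hy => hF' y (by simpa using hy))
  simpa [hF0] using hmono Set.self_mem_Ici hx.le hx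

noncomputable def denomSlope : ℝ → ℝ := expPoly (-4) (-1) 8 (-4) 1

lemma denomSlope_pos {x : ℝ} (hx : 0 < x) : 0 < denomSlope x := by
  unfold denomSlope
  have hderiv2_pos : ∀ y, 0 < y → 0 < expPoly (-2) (-1) 2 0 0 y := by
    intro y hy
    have hlin : y / 2 + 1 < exp (y / 2) := add_one_lt_exp (by positivity)
    have hsplit : exp (-y) = exp (-y / 2) * exp (-y / 2) := by rw [← exp_add]; ring_nf
    have hcancel : exp (y / 2) * exp (-y / 2) = 1 := by rw [← exp_add]; ring_nf; exact exp_zero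
    have hpos := exp_pos (-y / 2)
    simp only [expPoly, hsplit]
    nlinarith [mul_lt_mul_of_pos_right hlin (mul_pos hpos hpos)]
  have hderiv1_pos : ∀ y, 0 < y → 0 < expPoly 3 1 (-4) 1 0 y := by
    refine fun y hy => pos_of_hasDerivAt_of_pos (fun z => ?_) (by norm_num [expPoly_zero])
      hderiv2_pos hy
    convert hasDerivAt_expPoly 3 1 (-4) 1 0 z using 2 <;> norm_num
  refine pos_of_hasDerivAt_of_pos (fun z => ?_) (by norm_num [expPoly_zero]) hderiv1_pos hx
  convert hasDerivAt_expPoly (-4) (-1) 8 (-4) 1 z using 2 <;> norm_num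

lemma tendsto_denomSlope_div_pow_four :
    Tendsto (fun x => denomSlope x / x ^ 4) (𝓝[>] 0) (𝓝 (1 / 48)) := by
  unfold denomSlope
  have lim4 : Tendsto (fun x => expPoly 0 (-1) (1 / 2) 0 0 x / x ^ 0) (𝓝[>] 0) (𝓝 (1 / 2)) := by
    have hcont : Continuous (expPoly 0 (-1) (1 / 2) 0 0) := by unfold expPoly; fun_prop
    simpa [expPoly_zero] using (hcont.tendsto 0).mono_left nhdsWithin_le_nhds
  have lim3 := tendsto_div_pow_succ_of_hasDerivAt (F := expPoly 1 1 (-1) 0 0)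
    (fun x => by convert hasDerivAt_expPoly 1 1 (-1) 0 0 x using 2 <;> norm_num)
    (by norm_num [expPoly_zero]) lim4
  have lim2 := tendsto_div_pow_succ_of_hasDerivAt (F := expPoly (-2) (-1) 2 0 0)
    (fun x => by convert hasDerivAt_expPoly (-2) (-1) 2 0 0 x using 2 <;> norm_num)
    (by norm_num [expPoly_zero]) lim3
  have lim1 := tendsto_div_pow_succ_of_hasDerivAt (F := expPoly 3 1 (-4) 1 0)
    (fun x => by convert hasDerivAt_expPoly 3 1 (-4) 1 0 x using 2 <;> norm_num)
    (by norm_num [expPoly_zero]) lim2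
  have lim0 := tendsto_div_pow_succ_of_hasDerivAt (F := expPoly (-4) (-1) 8 (-4) 1)
    (fun x => by convert hasDerivAt_expPoly (-4) (-1) 8 (-4) 1 x using 2 <;> norm_num)
    (by norm_num [expPoly_zero]) lim1
  norm_num at lim0
  exact lim0

lemma tendsto_affine_div_affine_atTop (a b c : ℝ) {d : ℝ} (hd : d ≠ 0) :
    Tendsto (fun J => (a + b * J) / (c + d * J)) atTop (𝓝 (b / d)) := by
  have hinv (p : ℝ) : Tendsto (fun J : ℝ => p / J) atTop (𝓝 0) :=
    tendsto_const_nhds.div_atTop tendsto_id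
  have hlim := ((hinv a).add_const b).div ((hinv c).add_const d) (by simpa using hd)
  rw [zero_add, zero_add] at hlim
  refine hlim.congr' ?_
  filter_upwards [eventually_ne_atTop 0] with J hJ
  simp only [Pi.div_apply]
  field_simp

lemma denominator_eq_affine (η J x : ℝ) :
    -(1 + 2 * η * J * (4 + x)) * exp (-x) + 4 * (1 + 4 * J * η) * exp (-x / 2) +
        ((x - 3) + 2 * η * J * (x - 4)) =
      (-exp (-x) + 4 * exp (-x / 2) + x - 3) + 2 * η * denomSlope x * J := by
  simp only [denomSlope, expPoly]
  ring

/-- **Large-ensemble asymptotics of the noiseless error (Eq. HS_approx(b)).**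
For fixed `t > 0`, `J² f(t,J)` converges as `J → ∞` to
`M³t/(16ηg² h(Mt))` with `h(x) = −(4+x)e^{−x} + 8e^{−x/2} + x − 4`, and
`t³ · M³t/(16ηg² h(Mt)) → 3/(ηMg²)` as `t → 0⁺`. -/
theorem noiseless_error_large_ensemble_asymptotics
    (M η g t : ℝ) (hM : 0 < M) (hη : 0 < η) (hg : 0 < g) (ht : 0 < t)
    (f : ℝ → ℝ → ℝ)
    (hf : ∀ t > (0 : ℝ), ∀ J > (0 : ℝ), f t J =
      M ^ 2 * (1 + 2 * J * M * t * η) /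
        (16 * η * g ^ 2 * J ^ 2 *
          (-(1 + 2 * η * J * (4 + M * t)) * Real.exp (-M * t) +
            4 * (1 + 4 * J * η) * Real.exp (-M * t / 2) +
            ((M * t - 3) + 2 * η * J * (M * t - 4)))) )
    (h : ℝ → ℝ)
    (hh : ∀ x : ℝ, h x = -(4 + x) * Real.exp (-x) + 8 * Real.exp (-x / 2) + x - 4) :
    Tendsto (fun J : ℝ => J ^ 2 * f t J) atTop
      (nhds (M ^ 3 * t / (16 * η * g ^ 2 * h (M * t)))) ∧
    Tendsto (fun s : ℝ => s ^ 3 * (M ^ 3 * s / (16 * η * g ^ 2 * h (M * s))))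
      (nhdsWithin 0 (Set.Ioi 0)) (nhds (3 / (η * M * g ^ 2))) := by
  obtain rfl : h = denomSlope := funext fun x => by
    rw [hh]; simp only [denomSlope, expPoly]; ring
  constructor
  · have hH := denomSlope_pos (mul_pos hM ht)
    have hlim := tendsto_affine_div_affine_atTop (M ^ 2) (2 * M ^ 3 * t * η)
      (16 * η * g ^ 2 * (-exp (-(M * t)) + 4 * exp (-(M * t) / 2) + M * t - 3))
      (d := 32 * η ^ 2 * g ^ 2 * denomSlope (M * t)) (by positivity)
    have hval (H : ℝ) :
        2 * M ^ 3 * t * η / (32 * η ^ 2 * g ^ 2 * H) = M ^ 3 * t / (16 * η * g ^ 2 * H) := by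
      field_simp; ring
    rw [hval] at hlim
    refine hlim.congr' ?_
    filter_upwards [eventually_gt_atTop 0] with J hJ
    rw [hf t ht J hJ, neg_mul M t, denominator_eq_affine, mul_div_assoc',
      mul_comm (16 * η * g ^ 2) (J ^ 2), mul_assoc (J ^ 2), mul_div_mul_left _ _ (by positivity)]
    ring
  · have hmul : Tendsto (M * ·) (𝓝[>] 0) (𝓝[>] 0) :=
      tendsto_iff_comap.2 (comap_mulLeft_nhdsGT_zero hM).ge
    have hlim := ((tendsto_denomSlope_div_pow_four.inv₀ (by norm_num)).comp hmul).const_mul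
      (1 / (16 * η * g ^ 2 * M))
    have hval : 1 / (16 * η * g ^ 2 * M) * (1 / 48)⁻¹ = 3 / (η * M * g ^ 2) := by
      field_simp; norm_num
    rw [hval] at hlim
    refine hlim.congr fun s => ?_
    simp only [Function.comp_apply, inv_div]
    field_simp
end
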